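/- Let f : ℝ^n → ℂ be smooth and ℤ^n-periodic, let r ≥ 1 be an integer and C > 0 be such that for every subset S of {1,...,n} and every x ∈ ℝ^n one has |(∏_{i∈S} ∂^r/∂(x^i)^r) f(x)| ≤ C. Then for every m ∈ ℤ^n, |f̂_m| ≤ C·|N_m^r|. -/

import Mathlib

/-!
Integrating by parts over a period, where periodicity kills the boundary terms, gives
`(∂_i g)^_m = 2π√-1 m_i ĝ_m`. Applying `∂_i^r` for each `i` with `m_i ≠ 0`, i.e. the operator
`D = ∏_{i ∈ S} ∂_i^r` with `S = {i | m_i ≠ 0}`, therefore gives `f̂_m = N_m^r (D f)^_m`, and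
`|(D f)^_m| ≤ sup |D f| ≤ C` because the kernel has modulus one and the box has volume one.
-/

open MeasureTheory Complex
open scoped Real

noncomputable section

/-- The unit box `[0,1]^n` in `ℝ^n`. -/
def box (n : ℕ) : Set (Fin n → ℝ) := Set.univ.pi fun _ => Set.Icc (0:ℝ) 1

/-- `ℤ^n`-periodicity of a function on `ℝ^n`. -/
def IsPeriodic (n : ℕ) (f : (Fin n → ℝ) → ℂ) : Prop :=
  ∀ (x : Fin n → ℝ) (a : Fin n → ℤ), f (x + fun i => (a i : ℝ)) = f x

/-- The `m`-th Fourier coefficient `f̂_m = ∫_{[0,1]^n} f(x) e^{-2π√-1 m·x} dx`. -/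
def fourierCo (n : ℕ) (f : (Fin n → ℝ) → ℂ) (m : Fin n → ℤ) : ℂ :=
  ∫ x in box n, f x * Complex.exp (-2 * π * Complex.I * ∑ i, (m i : ℂ) * (x i : ℂ))

/-- `N_m = ∏_{i : m_i ≠ 0} 1/(2π√-1 m_i)`. -/
def Nm (n : ℕ) (m : Fin n → ℤ) : ℂ :=
  ∏ i ∈ Finset.univ.filter (fun i => m i ≠ 0), (1 / (2 * π * Complex.I * (m i : ℂ)))

/-- Partial derivative `∂/∂x^i`. -/
def pderiv1 (n : ℕ) (i : Fin n) (f : (Fin n → ℝ) → ℂ) : (Fin n → ℝ) → ℂ :=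
  fun x => fderiv ℝ f x (Pi.single i (1:ℝ))

/-- The operator `∏_{i ∈ S} ∂^r/∂(x^i)^r`. -/
def derivPowOn (n r : ℕ) (S : Finset (Fin n)) (f : (Fin n → ℝ) → ℂ) : (Fin n → ℝ) → ℂ :=
  (List.finRange n).foldr (fun i g => if i ∈ S then (pderiv1 n i)^[r] g else g) f

open scoped Pointwise

lemma isCompact_box (n : ℕ) : IsCompact (box n) :=
  isCompact_univ_pi fun _ => isCompact_Icc

lemma volume_box (n : ℕ) : volume (box n) = 1 := by
  rw [box, volume_pi_pi]
  simp [Real.volume_Icc]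

lemma Continuous.integrableOn_box {n : ℕ} {f : (Fin n → ℝ) → ℂ} (hf : Continuous f) :
    IntegrableOn f (box n) :=
  hf.continuousOn.integrableOn_compact (isCompact_box n)

lemma norm_setIntegral_box_le {n : ℕ} {f : (Fin n → ℝ) → ℂ} {C : ℝ} (hf : ∀ x, ‖f x‖ ≤ C) :
    ‖∫ x in box n, f x‖ ≤ C := by
  simpa [measureReal_def, volume_box] using norm_setIntegral_le_of_norm_le_const
    ((isCompact_box n).measure_lt_top (μ := volume)) fun x _ => hf x

namespace IsPeriodic

variable {n : ℕ} {f g : (Fin n → ℝ) → ℂ}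

lemma mul (hf : IsPeriodic n f) (hg : IsPeriodic n g) : IsPeriodic n (f * g) :=
  fun x a => show f _ * g _ = f x * g x by rw [hf, hg]

lemma fderiv_apply (hf : IsPeriodic n f) (v : Fin n → ℝ) :
    IsPeriodic n fun x => fderiv ℝ f x v := fun x a => by
  change fderiv ℝ f (x + _) v = fderiv ℝ f x v
  rw [← fderiv_comp_add_right, funext fun y => hf y a]

lemma exists_bound (hf : IsPeriodic n f) (hc : Continuous f) : ∃ B, ∀ x, ‖f x‖ ≤ B := by
  obtain ⟨B, hB⟩ := (isCompact_box n).exists_bound_of_continuousOn hc.continuousOn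
  refine ⟨B, fun x => ?_⟩
  have hx : x = (fun i => Int.fract (x i)) + fun i => ((⌊x i⌋ : ℤ) : ℝ) := by
    ext i; exact (Int.fract_add_floor _).symm
  rw [hx, hf]
  exact hB _ fun i _ => ⟨Int.fract_nonneg _, (Int.fract_lt_one _).le⟩

/-- The box agrees a.e. with the standard fundamental domain of `ℤ^n`, and any translate of a
fundamental domain is again one. -/
lemma setIntegral_box_comp_add (hf : IsPeriodic n f) (v : Fin n → ℝ) :
    ∫ x in box n, f (x + v) = ∫ x in box n, f x := by
  let b := Pi.basisFun ℝ (Fin n)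
  let L := Submodule.span ℤ (Set.range b)
  have : VAddInvariantMeasure L (Fin n → ℝ) volume :=
    inferInstanceAs (VAddInvariantMeasure L.toAddSubgroup _ volume)
  have hD : IsAddFundamentalDomain L (ZSpan.fundamentalDomain b) volume :=
    ZSpan.isAddFundamentalDomain b volume
  have hDbox : ZSpan.fundamentalDomain b =ᵐ[volume] box n := by
    rw [ZSpan.fundamentalDomain_pi_basisFun, box, Set.pi_univ_Icc, volume_pi]
    exact Measure.univ_pi_Ico_ae_eq_Icc
  have hinv : ∀ (l : L) x, f (l +ᵥ x) = f x := by
    rintro ⟨l, hl⟩ x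
    choose a ha using (b.mem_span_iff_repr_mem ℤ l).mp hl
    have hl : l = fun i => (a i : ℝ) := funext fun i => by simpa [b] using (ha i).symm
    change f (l + x) = f x
    rw [hl, add_comm, hf]
  calc ∫ x in box n, f (x + v) = ∫ x in ZSpan.fundamentalDomain b, f (v +ᵥ x) := by
        rw [setIntegral_congr_set hDbox]; simp_rw [vadd_eq_add, add_comm]
    _ = ∫ x in v +ᵥ ZSpan.fundamentalDomain b, f x :=
        ((measurePreserving_vadd v volume).setIntegral_image_emb
          (measurableEmbedding_const_vadd v) f _).symm
    _ = ∫ x in ZSpan.fundamentalDomain b, f x := (hD.vadd_of_comm v).setIntegral_eq hD hinv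
    _ = ∫ x in box n, f x := setIntegral_congr_set hDbox

/-- Differentiate the constant function `t ↦ ∫_{[0,1]^n} f (x + t v)` under the integral sign. -/
lemma setIntegral_box_fderiv_eq_zero (hf : IsPeriodic n f) (hc : ContDiff ℝ 1 f)
    (v : Fin n → ℝ) : ∫ x in box n, fderiv ℝ f x v = 0 := by
  have hdc : Continuous fun x => fderiv ℝ f x v :=
    (hc.continuous_fderiv one_ne_zero).clm_apply continuous_const
  obtain ⟨B, hB⟩ := (hf.fderiv_apply v).exists_bound hdc
  have hline : ∀ x t, HasDerivAt (fun s : ℝ => f (x + s • v)) (fderiv ℝ f (x + t • v) v) t :=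
    fun x t => ((hc.differentiable one_ne_zero _).hasFDerivAt.comp_hasDerivAt t
      (by simpa using ((hasDerivAt_id t).smul_const v).const_add x))
  have hshift : ∀ t : ℝ, Continuous fun x : Fin n → ℝ => x + t • v :=
    fun t => continuous_id.add continuous_const
  obtain ⟨-, hderiv⟩ := hasDerivAt_integral_of_dominated_loc_of_deriv_le
    (μ := volume.restrict (box n)) (F := fun t x => f (x + t • v)) (x₀ := 0) (bound := fun _ => B)
    Filter.univ_mem
    (Filter.Eventually.of_forall fun t => (hc.continuous.comp (hshift t)).aestronglyMeasurable)
    (hc.continuous.comp (hshift 0)).integrableOn_box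
    (hdc.comp (hshift 0)).aestronglyMeasurable
    (ae_of_all _ fun x t _ => hB _)
    (integrableOn_const (by simp [volume_box]))
    (ae_of_all _ fun x t _ => hline x t)
  simp_rw [hf.setIntegral_box_comp_add, zero_smul, add_zero] at hderiv
  exact hderiv.unique (hasDerivAt_const 0 _)

end IsPeriodic

section FourierKernel

variable {n : ℕ}

def fourierPhase (m : Fin n → ℤ) : (Fin n → ℝ) →L[ℝ] ℂ :=
  ∑ j, (-2 * π * I * m j) • ofRealCLM.comp (ContinuousLinearMap.proj j)

lemma fourierPhase_apply (m : Fin n → ℤ) (x : Fin n → ℝ) :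
    fourierPhase m x = -2 * π * I * ∑ j, (m j : ℂ) * (x j : ℂ) := by
  simp [fourierPhase, Finset.mul_sum]
  ring_nf

lemma fourierCo_eq (f : (Fin n → ℝ) → ℂ) (m : Fin n → ℤ) :
    fourierCo n f m = ∫ x in box n, f x * cexp (fourierPhase m x) := by
  simp_rw [fourierPhase_apply]; rfl

lemma norm_exp_fourierPhase (m : Fin n → ℤ) (x : Fin n → ℝ) :
    ‖cexp (fourierPhase m x)‖ = 1 := by
  rw [fourierPhase_apply, ← norm_exp_ofReal_mul_I (-2 * π * ∑ j, (m j : ℝ) * x j)]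
  push_cast
  ring_nf

lemma isPeriodic_exp_fourierPhase (m : Fin n → ℤ) :
    IsPeriodic n fun x => cexp (fourierPhase m x) := fun x a => by
  change cexp (fourierPhase m (x + _)) = cexp (fourierPhase m x)
  have hint : fourierPhase m (fun i => (a i : ℝ)) = ((-∑ j, m j * a j : ℤ) : ℂ) * (2 * π * I) := by
    rw [fourierPhase_apply]; push_cast; ring
  rw [map_add, Complex.exp_add, hint, Complex.exp_int_mul_two_pi_mul_I, mul_one]

lemma contDiff_exp_fourierPhase (m : Fin n → ℤ) :
    ContDiff ℝ ⊤ fun x => cexp (fourierPhase m x) :=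
  (fourierPhase m).contDiff.cexp

lemma fderiv_exp_fourierPhase_single (m : Fin n → ℤ) (x : Fin n → ℝ) (i : Fin n) :
    fderiv ℝ (fun y => cexp (fourierPhase m y)) x (Pi.single i 1)
      = -2 * π * I * m i * cexp (fourierPhase m x) := by
  rw [((fourierPhase m).hasFDerivAt.cexp).fderiv]
  simp [fourierPhase_apply, Pi.single_apply, apply_ite]
  ring

end FourierKernel

lemma fourierCo_pderiv1 {n : ℕ} {g : (Fin n → ℝ) → ℂ} (hg : ContDiff ℝ 1 g)
    (hp : IsPeriodic n g) (m : Fin n → ℤ) (i : Fin n) :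
    fourierCo n (pderiv1 n i g) m = 2 * π * I * m i * fourierCo n g m := by
  set e : (Fin n → ℝ) → ℂ := fun x => cexp (fourierPhase m x)
  have he : ContDiff ℝ 1 e := (contDiff_exp_fourierPhase m).of_le le_top
  have hprod : ∀ x, fderiv ℝ (g * e) x (Pi.single i 1)
      = pderiv1 n i g x * e x + (-2 * π * I * m i) * (g x * e x) := fun x => by
    rw [fderiv_mul (hg.differentiable one_ne_zero x) (he.differentiable one_ne_zero x)]
    simp only [add_apply, smul_apply, smul_eq_mul, e, fderiv_exp_fourierPhase_single, pderiv1]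
    ring
  have hzero : ∫ x in box n, fderiv ℝ (g * e) x (Pi.single i 1) = 0 :=
    (hp.mul (isPeriodic_exp_fourierPhase m)).setIntegral_box_fderiv_eq_zero (hg.mul he) _
  have hdc : Continuous (pderiv1 n i g) :=
    (hg.continuous_fderiv one_ne_zero).clm_apply continuous_const
  simp_rw [hprod] at hzero
  rw [integral_add, integral_const_mul, ← fourierCo_eq, ← fourierCo_eq] at hzero
  · linear_combination hzero
  · exact (hdc.mul he.continuous).integrableOn_box
  · exact (hg.continuous.mul he.continuous).integrableOn_box.const_mul _

lemma norm_fourierCo_le {n : ℕ} {g : (Fin n → ℝ) → ℂ} {C : ℝ} (hg : ∀ x, ‖g x‖ ≤ C)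
    (m : Fin n → ℤ) : ‖fourierCo n g m‖ ≤ C := by
  rw [fourierCo_eq]
  exact norm_setIntegral_box_le fun x => by
    rw [norm_mul, norm_exp_fourierPhase, mul_one]; exact hg x

lemma Nm_mul_prod_eq_one (n : ℕ) (m : Fin n → ℤ) :
    Nm n m * ∏ i ∈ Finset.univ.filter (fun i => m i ≠ 0), (2 * π * I * m i) = 1 := by
  rw [Nm, ← Finset.prod_mul_distrib]
  refine Finset.prod_eq_one fun i hi => one_div_mul_cancel ?_
  have hmi : (m i : ℂ) ≠ 0 := by exact_mod_cast (Finset.mem_filter.mp hi).2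
  simp [Real.pi_ne_zero, I_ne_zero, hmi]

def SmoothPeriodic (n : ℕ) (f : (Fin n → ℝ) → ℂ) : Prop :=
  ContDiff ℝ (⊤ : ℕ∞) f ∧ IsPeriodic n f

namespace SmoothPeriodic

variable {n : ℕ} {f : (Fin n → ℝ) → ℂ}

lemma pderiv1 (hf : SmoothPeriodic n f) (i : Fin n) : SmoothPeriodic n (_root_.pderiv1 n i f) :=
  ⟨(hf.1.fderiv_right (by simp)).clm_apply contDiff_const, hf.2.fderiv_apply _⟩

lemma iterate_pderiv1 (hf : SmoothPeriodic n f) (i : Fin n) (r : ℕ) :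
    SmoothPeriodic n ((_root_.pderiv1 n i)^[r] f) :=
  Function.Iterate.rec _ hf (fun _ hg => hg.pderiv1 i) r

lemma fourierCo_iterate_pderiv1 (hf : SmoothPeriodic n f) (m : Fin n → ℤ) (i : Fin n) (r : ℕ) :
    fourierCo n ((_root_.pderiv1 n i)^[r] f) m = (2 * π * I * m i) ^ r * fourierCo n f m := by
  induction r with
  | zero => simp
  | succ r ih =>
    obtain ⟨hc, hp⟩ := hf.iterate_pderiv1 i r
    rw [Function.iterate_succ_apply', fourierCo_pderiv1 (hc.of_le (by simp)) hp, ih, pow_succ]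
    ring

lemma foldr_iterate_pderiv1 (hf : SmoothPeriodic n f) (S : Finset (Fin n)) (r : ℕ)
    (L : List (Fin n)) :
    SmoothPeriodic n (L.foldr (fun i g => if i ∈ S then (_root_.pderiv1 n i)^[r] g else g) f) := by
  induction L with
  | nil => exact hf
  | cons i L ih =>
    simp only [List.foldr_cons]
    split_ifs
    exacts [ih.iterate_pderiv1 i r, ih]

lemma fourierCo_foldr_iterate_pderiv1 (hf : SmoothPeriodic n f) (m : Fin n → ℤ)
    (S : Finset (Fin n)) (r : ℕ) (L : List (Fin n)) :
    fourierCo n (L.foldr (fun i g => if i ∈ S then (_root_.pderiv1 n i)^[r] g else g) f) m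
      = (L.map fun i => if i ∈ S then (2 * π * I * m i) ^ r else 1).prod * fourierCo n f m := by
  induction L with
  | nil => simp
  | cons i L ih =>
    simp only [List.foldr_cons, List.map_cons, List.prod_cons]
    split_ifs
    · rw [(hf.foldr_iterate_pderiv1 S r L).fourierCo_iterate_pderiv1, ih, ← mul_assoc]
    · rw [ih, one_mul]

lemma fourierCo_derivPowOn (hf : SmoothPeriodic n f) (m : Fin n → ℤ) (S : Finset (Fin n))
    (r : ℕ) :
    fourierCo n (derivPowOn n r S f) m = (∏ i ∈ S, (2 * π * I * m i) ^ r) * fourierCo n f m := by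
  rw [derivPowOn, hf.fourierCo_foldr_iterate_pderiv1, ← Fin.prod_univ_def, Finset.prod_ite_mem,
    Finset.univ_inter]

end SmoothPeriodic

theorem statement0_general (n : ℕ) (f : (Fin n → ℝ) → ℂ)
    (hf : ContDiff ℝ (⊤ : ℕ∞) f) (hper : IsPeriodic n f)
    (r : ℕ) (C : ℝ)
    (hbound : ∀ (S : Finset (Fin n)) (x : Fin n → ℝ),
      ‖derivPowOn n r S f x‖ ≤ C) :
    ∀ m : Fin n → ℤ, ‖fourierCo n f m‖ ≤ C * ‖Nm n m ^ r‖ := by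
  intro m
  set S := Finset.univ.filter fun i => m i ≠ 0
  have hco : fourierCo n f m = Nm n m ^ r * fourierCo n (derivPowOn n r S f) m := by
    rw [SmoothPeriodic.fourierCo_derivPowOn ⟨hf, hper⟩, Finset.prod_pow, ← mul_assoc, ← mul_pow,
      Nm_mul_prod_eq_one, one_pow, one_mul]
  rw [hco, norm_mul, mul_comm C]
  exact mul_le_mul_of_nonneg_left (norm_fourierCo_le (hbound S) m) (norm_nonneg _)

/-- If `f : ℝ^n → ℂ` is smooth and `ℤ^n`-periodic, `r ≥ 1`, and `C > 0` bounds
`|(∏_{i∈S} ∂^r/∂(x^i)^r) f(x)|` for all subsets `S ⊆ {1,…,n}` and all `x`, then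
`|f̂_m| ≤ C·|N_m^r|` for all `m ∈ ℤ^n`. -/
theorem statement0 (n : ℕ) (f : (Fin n → ℝ) → ℂ)
    (hf : ContDiff ℝ (⊤ : ℕ∞) f) (hper : IsPeriodic n f)
    (r : ℕ) (hr : 1 ≤ r) (C : ℝ) (hC : 0 < C)
    (hbound : ∀ (S : Finset (Fin n)) (x : Fin n → ℝ),
      ‖derivPowOn n r S f x‖ ≤ C) :
    ∀ m : Fin n → ℤ, ‖fourierCo n f m‖ ≤ C * ‖Nm n m ^ r‖ :=
  statement0_general n f hf hper r C hbound
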